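/- arXiv:1312.0041 — 13 statements merged into one kernel-verified Lean document; each statement's English description precedes it below -/
import Mathlib

section
/- In the setting below, suppose Ã w = λ w for some λ ∈ ℂ with λ ≠ 0 and some vector w ∈ ℂʳ with w ≠ 0. Then the vector φ := λ⁻¹ • (Y V Σ⁻¹) w satisfies A φ = λ φ and φ ≠ 0; that is, each eigenvector of Ã with nonzero eigenvalue λ yields an eigenvector of A with the same eigenvalue. -/
open Matrix

/-- Exact DMD modes with nonzero eigenvalue are eigenvectors of `A = Y V Σ⁻¹ Uᴴ`. -/
theorem exact_dmd_mode_is_eigenvector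
    {n m r : ℕ} (hn : 0 < n) (hm : 0 < m) (hr : 0 < r)
    (X Y : Matrix (Fin n) (Fin m) ℂ)
    (U : Matrix (Fin n) (Fin r) ℂ) (S : Matrix (Fin r) (Fin r) ℂ)
    (V : Matrix (Fin m) (Fin r) ℂ)
    (hX : X = U * S * Vᴴ)
    (hU : Uᴴ * U = 1) (hV : Vᴴ * V = 1)
    (hSdiag : S.IsDiag) (hSpos : ∀ i, ∃ σ : ℝ, 0 < σ ∧ S i i = (σ : ℂ))
    [Invertible S]
    (l : ℂ) (hl : l ≠ 0) (w : Fin r → ℂ) (hw0 : w ≠ 0)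
    (hw : (Uᴴ * Y * V * S⁻¹).mulVec w = l • w) :
    (Y * V * S⁻¹ * Uᴴ).mulVec (l⁻¹ • (Y * V * S⁻¹).mulVec w)
        = l • (l⁻¹ • (Y * V * S⁻¹).mulVec w)
      ∧ l⁻¹ • (Y * V * S⁻¹).mulVec w ≠ 0 := by
  set B := Y * V * S⁻¹ with hB
  have key : Uᴴ.mulVec (B.mulVec w) = l • w := by
    rw [mulVec_mulVec, hB, ← hw]
    rw [show Uᴴ * (Y * V * S⁻¹) = Uᴴ * Y * V * S⁻¹ by simp [Matrix.mul_assoc]]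
  have hBw : B.mulVec w ≠ 0 := by
    intro h
    apply hw0
    have : l • w = 0 := by rw [← key, h, mulVec_zero]
    simpa [hl] using this
  constructor
  · rw [mulVec_smul, ← mulVec_mulVec, key, mulVec_smul, smul_smul, smul_smul,
      inv_mul_cancel₀ hl, mul_inv_cancel₀ hl, one_smul]
  · simp [smul_ne_zero, inv_ne_zero hl, hBw]
end

section
/- In the setting below, suppose A φ = λ φ for some λ ∈ ℂ with λ ≠ 0 and some vector φ ∈ ℂⁿ with φ ≠ 0. Then the vector w := Uᴴ φ satisfies Ã w = λ w and w ≠ 0; that is, every nonzero eigenvalue of A is an eigenvalue of Ã. -/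
open Matrix

/-- Every nonzero eigenvalue of `A = Y V Σ⁻¹ Uᴴ` is an eigenvalue of `Ã = Uᴴ Y V Σ⁻¹`,
with eigenvector `w = Uᴴ φ`. -/
theorem nonzero_eigenvalue_of_A_is_eigenvalue_of_Atilde
    {n m r : ℕ} (hn : 0 < n) (hm : 0 < m) (hr : 0 < r)
    (X Y : Matrix (Fin n) (Fin m) ℂ)
    (U : Matrix (Fin n) (Fin r) ℂ) (S : Matrix (Fin r) (Fin r) ℂ)
    (V : Matrix (Fin m) (Fin r) ℂ)
    (hX : X = U * S * Vᴴ)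
    (hU : Uᴴ * U = 1) (hV : Vᴴ * V = 1)
    (hSdiag : S.IsDiag) (hSpos : ∀ i, ∃ σ : ℝ, 0 < σ ∧ S i i = (σ : ℂ))
    [Invertible S]
    (l : ℂ) (hl : l ≠ 0) (φ : Fin n → ℂ) (hφ0 : φ ≠ 0)
    (hφ : (Y * V * S⁻¹ * Uᴴ).mulVec φ = l • φ) :
    (Uᴴ * Y * V * S⁻¹).mulVec (Uᴴ.mulVec φ) = l • Uᴴ.mulVec φ
      ∧ Uᴴ.mulVec φ ≠ 0 := by
  have key : (Uᴴ * Y * V * S⁻¹).mulVec (Uᴴ.mulVec φ) = l • Uᴴ.mulVec φ := by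
    rw [mulVec_mulVec]
    have : Uᴴ * Y * V * S⁻¹ * Uᴴ = Uᴴ * (Y * V * S⁻¹ * Uᴴ) := by simp [Matrix.mul_assoc]
    rw [this, ← mulVec_mulVec, hφ, mulVec_smul]
  refine ⟨key, fun h => ?_⟩
  have : (Y * V * S⁻¹ * Uᴴ).mulVec φ = 0 := by
    have : Y * V * S⁻¹ * Uᴴ = (Y * V * S⁻¹) * Uᴴ := by simp [Matrix.mul_assoc]
    rw [this, ← mulVec_mulVec, h, mulVec_zero]
  rw [hφ] at this
  exact hφ0 (by simpa [hl] using smul_eq_zero.mp this)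
end

section
/- In the setting below, suppose Ã w = λ w for some λ ∈ ℂ with λ ≠ 0 and some vector w ∈ ℂʳ with w ≠ 0. Then the vector φ̂ := U w is nonzero and satisfies (U Uᴴ) A φ̂ = λ φ̂; that is, the projected DMD mode U w is an eigenvector of ℙ_X A with eigenvalue λ, where ℙ_X = U Uᴴ is the orthogonal projection onto the column space of X. -/
open Matrix

/-- The projected DMD mode `U w` is an eigenvector of `ℙ_X A = U Uᴴ A` with eigenvalue `λ`. -/
theorem projected_dmd_mode_is_eigenvector_of_projected_A
    {n m r : ℕ} (hn : 0 < n) (hm : 0 < m) (hr : 0 < r)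
    (X Y : Matrix (Fin n) (Fin m) ℂ)
    (U : Matrix (Fin n) (Fin r) ℂ) (S : Matrix (Fin r) (Fin r) ℂ)
    (V : Matrix (Fin m) (Fin r) ℂ)
    (hX : X = U * S * Vᴴ)
    (hU : Uᴴ * U = 1) (hV : Vᴴ * V = 1)
    (hSdiag : S.IsDiag) (hSpos : ∀ i, ∃ σ : ℝ, 0 < σ ∧ S i i = (σ : ℂ))
    [Invertible S]
    (l : ℂ) (hl : l ≠ 0) (w : Fin r → ℂ) (hw0 : w ≠ 0)
    (hw : (Uᴴ * Y * V * S⁻¹).mulVec w = l • w) :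
    (U * Uᴴ * (Y * V * S⁻¹ * Uᴴ)).mulVec (U.mulVec w) = l • U.mulVec w
      ∧ U.mulVec w ≠ 0 := by
  constructor
  · have key : U * Uᴴ * (Y * V * S⁻¹ * Uᴴ) * U = U * (Uᴴ * Y * V * S⁻¹) := by
      have : U * Uᴴ * (Y * V * S⁻¹ * Uᴴ) * U
          = U * (Uᴴ * Y * V * S⁻¹) * (Uᴴ * U) := by
        simp only [Matrix.mul_assoc]
      rw [this, hU, Matrix.mul_one]
    rw [Matrix.mulVec_mulVec, key, ← Matrix.mulVec_mulVec, hw,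
      Matrix.mulVec_smul]
  · intro h
    apply hw0
    have : Uᴴ.mulVec (U.mulVec w) = 0 := by rw [h, Matrix.mulVec_zero]
    rwa [Matrix.mulVec_mulVec, hU, Matrix.one_mulVec] at this
end

section
/- In the setting below, suppose Ã w = λ w for some λ ∈ ℂ with λ ≠ 0 and some vector w ∈ ℂʳ, and let φ := λ⁻¹ • (Y V Σ⁻¹) w be the corresponding exact DMD mode. Then Uᴴ φ = w, and consequently (U Uᴴ) φ = U w; that is, the projected DMD mode U w is the orthogonal projection of the exact DMD mode φ onto the column space of X. -/
open Matrix

/-- The projected DMD mode `U w` is the orthogonal projection of the exact DMD mode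
`φ = λ⁻¹ Y V Σ⁻¹ w` onto the column space of `X`: in fact `Uᴴ φ = w`. -/
theorem projected_mode_is_projection_of_exact_mode
    {n m r : ℕ} (hn : 0 < n) (hm : 0 < m) (hr : 0 < r)
    (X Y : Matrix (Fin n) (Fin m) ℂ)
    (U : Matrix (Fin n) (Fin r) ℂ) (S : Matrix (Fin r) (Fin r) ℂ)
    (V : Matrix (Fin m) (Fin r) ℂ)
    (hX : X = U * S * Vᴴ)
    (hU : Uᴴ * U = 1) (hV : Vᴴ * V = 1)
    (hSdiag : S.IsDiag) (hSpos : ∀ i, ∃ σ : ℝ, 0 < σ ∧ S i i = (σ : ℂ))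
    [Invertible S]
    (l : ℂ) (hl : l ≠ 0) (w : Fin r → ℂ)
    (hw : (Uᴴ * Y * V * S⁻¹).mulVec w = l • w) :
    Uᴴ.mulVec (l⁻¹ • (Y * V * S⁻¹).mulVec w) = w
      ∧ (U * Uᴴ).mulVec (l⁻¹ • (Y * V * S⁻¹).mulVec w) = U.mulVec w := by
  have h1 : Uᴴ.mulVec (l⁻¹ • (Y * V * S⁻¹).mulVec w) = w := by
    simp only [mulVec_smul, ← mulVec_mulVec] at hw ⊢
    rw [hw, smul_smul, inv_mul_cancel₀ hl, one_smul]
  refine ⟨h1, ?_⟩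
  rw [← mulVec_mulVec, h1]
end

section
/- In the setting below, suppose z ∈ ℂʳ satisfies zᴴ Ã = λ zᴴ for some λ ∈ ℂ (i.e., z is a left eigenvector of Ã with eigenvalue λ). Then ψ := U z satisfies ψᴴ A = λ ψᴴ; that is, ψ is a left (adjoint) eigenvector of A with eigenvalue λ. -/
open Matrix

/-- If `z` is a left eigenvector of `Ã = Uᴴ Y V Σ⁻¹`, then `ψ = U z` is a left (adjoint)
eigenvector of `A = Y V Σ⁻¹ Uᴴ` with the same eigenvalue. -/
theorem adjoint_dmd_mode_is_left_eigenvector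
    {n m r : ℕ} (hn : 0 < n) (hm : 0 < m) (hr : 0 < r)
    (X Y : Matrix (Fin n) (Fin m) ℂ)
    (U : Matrix (Fin n) (Fin r) ℂ) (S : Matrix (Fin r) (Fin r) ℂ)
    (V : Matrix (Fin m) (Fin r) ℂ)
    (hX : X = U * S * Vᴴ)
    (hU : Uᴴ * U = 1) (hV : Vᴴ * V = 1)
    (hSdiag : S.IsDiag) (hSpos : ∀ i, ∃ σ : ℝ, 0 < σ ∧ S i i = (σ : ℂ))
    [Invertible S]
    (l : ℂ) (z : Fin r → ℂ)
    (hz : Matrix.vecMul (star z) (Uᴴ * Y * V * S⁻¹) = l • star z) :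
    Matrix.vecMul (star (U.mulVec z)) (Y * V * S⁻¹ * Uᴴ)
      = l • star (U.mulVec z) := by
  rw [star_mulVec]
  calc vecMul (vecMul (star z) Uᴴ) (Y * V * S⁻¹ * Uᴴ)
      = vecMul (vecMul (star z) (Uᴴ * (Y * V * S⁻¹))) Uᴴ := by
        rw [vecMul_vecMul, vecMul_vecMul, ← Matrix.mul_assoc]
    _ = l • vecMul (star z) Uᴴ := by
        rw [show Uᴴ * (Y * V * S⁻¹) = Uᴴ * Y * V * S⁻¹ by simp [Matrix.mul_assoc], hz,
          Matrix.smul_vecMul]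
end

section
/- In the setting below, suppose w ∈ ℂʳ satisfies Ã w = 0 and the vector φ := (Y V Σ⁻¹) w is nonzero. Then A φ = 0; that is, φ is an eigenvector of A with eigenvalue 0, lying in the column space of Y. -/
open Matrix

/-- If `Ã w = 0` and `φ = Y V Σ⁻¹ w ≠ 0`, then `φ` is an eigenvector of `A` with
eigenvalue `0` (lying in the column space of `Y`). -/
theorem kernel_mode_in_image_Y
    {n m r : ℕ} (hn : 0 < n) (hm : 0 < m) (hr : 0 < r)
    (X Y : Matrix (Fin n) (Fin m) ℂ)
    (U : Matrix (Fin n) (Fin r) ℂ) (S : Matrix (Fin r) (Fin r) ℂ)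
    (V : Matrix (Fin m) (Fin r) ℂ)
    (hX : X = U * S * Vᴴ)
    (hU : Uᴴ * U = 1) (hV : Vᴴ * V = 1)
    (hSdiag : S.IsDiag) (hSpos : ∀ i, ∃ σ : ℝ, 0 < σ ∧ S i i = (σ : ℂ))
    [Invertible S]
    (w : Fin r → ℂ)
    (hw : (Uᴴ * Y * V * S⁻¹).mulVec w = 0)
    (hφ : (Y * V * S⁻¹).mulVec w ≠ 0) :
    (Y * V * S⁻¹ * Uᴴ).mulVec ((Y * V * S⁻¹).mulVec w) = 0 := by
  rw [mulVec_mulVec]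
  have : Y * V * S⁻¹ * Uᴴ * (Y * V * S⁻¹) = Y * V * S⁻¹ * (Uᴴ * Y * V * S⁻¹) := by
    simp only [Matrix.mul_assoc]
  rw [this, ← mulVec_mulVec, hw, mulVec_zero]
end

section
/- In the setting below, suppose w ∈ ℂʳ is nonzero and satisfies Ã w = 0 and (Y V Σ⁻¹) w = 0. Then the vector U w is nonzero and satisfies A (U w) = 0; that is, U w is an eigenvector of A with eigenvalue 0, lying in the column space of X. -/
open Matrix

/-- If `w ≠ 0`, `Ã w = 0` and `Y V Σ⁻¹ w = 0`, then `U w` is a (nonzero) eigenvector of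
`A` with eigenvalue `0` (lying in the column space of `X`). -/
theorem kernel_mode_in_image_X
    {n m r : ℕ} (hn : 0 < n) (hm : 0 < m) (hr : 0 < r)
    (X Y : Matrix (Fin n) (Fin m) ℂ)
    (U : Matrix (Fin n) (Fin r) ℂ) (S : Matrix (Fin r) (Fin r) ℂ)
    (V : Matrix (Fin m) (Fin r) ℂ)
    (hX : X = U * S * Vᴴ)
    (hU : Uᴴ * U = 1) (hV : Vᴴ * V = 1)
    (hSdiag : S.IsDiag) (hSpos : ∀ i, ∃ σ : ℝ, 0 < σ ∧ S i i = (σ : ℂ))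
    [Invertible S]
    (w : Fin r → ℂ) (hw0 : w ≠ 0)
    (hw : (Uᴴ * Y * V * S⁻¹).mulVec w = 0)
    (hYw : (Y * V * S⁻¹).mulVec w = 0) :
    U.mulVec w ≠ 0 ∧ (Y * V * S⁻¹ * Uᴴ).mulVec (U.mulVec w) = 0 := by
  constructor
  · intro h
    apply hw0
    have : (Uᴴ * U).mulVec w = 0 := by
      rw [← Matrix.mulVec_mulVec, h, Matrix.mulVec_zero]
    simpa [hU] using this
  · rw [Matrix.mulVec_mulVec]
    have : Y * V * S⁻¹ * Uᴴ * U = Y * V * S⁻¹ := by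
      rw [Matrix.mul_assoc, hU, Matrix.mul_one]
    rw [this, hYw]
end

section
/- Let U be an n×r complex matrix with Uᴴ U = I_r, let q ∈ ℂⁿ, and let B be an n×r complex matrix satisfying B = U Uᴴ B + q qᴴ B, where q qᴴ denotes the n×n outer product (i.e., the columns of B lie in the span of the columns of U together with q). Suppose (Uᴴ B) w = λ w for some λ ∈ ℂ with λ ≠ 0 and some w ∈ ℂʳ. Then λ⁻¹ • B w = U w + λ⁻¹ • ((qᴴ B w) • q); that is, the exact DMD mode λ⁻¹ B w equals the projected DMD mode U w plus the correction λ⁻¹ (qᴴ B w) q. -/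
open Matrix

/-- For a sequential time series, the exact DMD mode `λ⁻¹ B w` equals the projected DMD
mode `U w` plus the correction `λ⁻¹ (qᴴ B w) q`. -/
theorem exact_mode_eq_projected_mode_plus_correction
    {n r : ℕ} (U : Matrix (Fin n) (Fin r) ℂ) (hU : Uᴴ * U = 1)
    (q : Fin n → ℂ) (B : Matrix (Fin n) (Fin r) ℂ)
    (hB : B = U * Uᴴ * B + Matrix.vecMulVec q (star q) * B)
    (l : ℂ) (hl : l ≠ 0) (w : Fin r → ℂ)
    (hw : (Uᴴ * B).mulVec w = l • w) :
    l⁻¹ • B.mulVec w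
      = U.mulVec w + l⁻¹ • ((star q ⬝ᵥ B.mulVec w) • q) := by
  have h1 : B.mulVec w = (U * Uᴴ * B).mulVec w + (Matrix.vecMulVec q (star q) * B).mulVec w := by
    conv_lhs => rw [hB]
    rw [Matrix.add_mulVec]
  have h2 : (U * Uᴴ * B).mulVec w = l • U.mulVec w := by
    rw [Matrix.mul_assoc, ← Matrix.mulVec_mulVec, hw, Matrix.mulVec_smul]
  have h3 : (Matrix.vecMulVec q (star q) * B).mulVec w = (star q ⬝ᵥ B.mulVec w) • q := by
    rw [← Matrix.mulVec_mulVec]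
    ext i
    simp only [Matrix.vecMulVec, Matrix.mulVec, dotProduct, Finset.mul_sum,
      Matrix.of_apply, Pi.smul_apply, smul_eq_mul]
    rw [Finset.sum_mul]
    refine Finset.sum_congr rfl fun x _ => ?_
    rw [Finset.sum_mul]
    exact Finset.sum_congr rfl fun y _ => by ring
  conv_lhs => rw [h1, h2, h3]
  rw [ smul_add, smul_smul, inv_mul_cancel₀ hl, one_smul]
end

section
/- Let X and Y be n×m complex matrices and let X⁺ be an m×n matrix satisfying the Penrose conditions for X. Then for every n×n complex matrix A, ‖(Y X⁺) X − Y‖_F ≤ ‖A X − Y‖_F, where ‖·‖_F denotes the Frobenius norm; that is, A₀ := Y X⁺ minimizes ‖A X − Y‖_F over all n×n matrices A. -/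
open Matrix

/-- The Frobenius norm of a complex matrix: `‖M‖_F = (trace (M Mᴴ))^{1/2}`. -/
noncomputable def frobNorm {n m : ℕ} (M : Matrix (Fin n) (Fin m) ℂ) : ℝ :=
  Real.sqrt ((M * Mᴴ).trace.re)

lemma frob_sq_nonneg {n m : ℕ} (M : Matrix (Fin n) (Fin m) ℂ) :
    0 ≤ ((M * Mᴴ).trace).re := by
  have : (M * Mᴴ).trace = ∑ i, ∑ j, M i j * star (M i j) := by
    simp [Matrix.trace, Matrix.mul_apply, Matrix.diag, Matrix.conjTranspose_apply]
  rw [this]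
  rw [Complex.re_sum]
  apply Finset.sum_nonneg
  intro i _
  rw [Complex.re_sum]
  apply Finset.sum_nonneg
  intro j _
  rw [show star (M i j) = (starRingEnd ℂ) (M i j) from rfl, Complex.mul_conj']
  norm_cast
  positivity

/-- `A₀ = Y X⁺` minimizes `‖A X − Y‖_F` over all `n × n` matrices `A`. -/
theorem pseudoinverse_solution_minimizes_residual
    {n m : ℕ} (X Y : Matrix (Fin n) (Fin m) ℂ)
    (Xplus : Matrix (Fin m) (Fin n) ℂ)
    (h1 : X * Xplus * X = X)
    (h2 : Xplus * X * Xplus = Xplus)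
    (h3 : (X * Xplus)ᴴ = X * Xplus)
    (h4 : (Xplus * X)ᴴ = Xplus * X) :
    ∀ A : Matrix (Fin n) (Fin n) ℂ,
      frobNorm ((Y * Xplus) * X - Y) ≤ frobNorm (A * X - Y) := by
  intro A
  set C : Matrix (Fin n) (Fin m) ℂ := (A - Y * Xplus) * X with hC
  set D : Matrix (Fin n) (Fin m) ℂ := Y * Xplus * X - Y with hD
  have hsplit : A * X - Y = C + D := by
    rw [hC, hD, Matrix.sub_mul]; abel
  have hXD : X * Dᴴ = 0 := by
    have hDH : Dᴴ = Xplus * X * Yᴴ - Yᴴ := by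
      rw [hD, Matrix.conjTranspose_sub, Matrix.mul_assoc, Matrix.conjTranspose_mul, h4]
    rw [hDH, Matrix.mul_sub, ← Matrix.mul_assoc, ← Matrix.mul_assoc, h1, sub_self]
  have hCD : C * Dᴴ = 0 := by
    rw [hC, Matrix.mul_assoc, hXD, Matrix.mul_zero]
  have hDC : D * Cᴴ = 0 := by
    have := congrArg Matrix.conjTranspose hCD
    rwa [Matrix.conjTranspose_mul, Matrix.conjTranspose_conjTranspose,
      Matrix.conjTranspose_zero] at this
  have htr : ((A * X - Y) * (A * X - Y)ᴴ).trace
      = (C * Cᴴ).trace + (D * Dᴴ).trace := by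
    rw [hsplit, Matrix.conjTranspose_add, Matrix.add_mul, Matrix.mul_add,
      Matrix.mul_add, hCD, hDC]
    simp [Matrix.trace_add]
  have hle : ((D * Dᴴ).trace).re ≤ (((A * X - Y) * (A * X - Y)ᴴ).trace).re := by
    rw [htr, Complex.add_re]
    linarith [frob_sq_nonneg C]
  rw [frobNorm, frobNorm]
  exact Real.sqrt_le_sqrt hle
end

section
/- Let X and Y be n×m complex matrices and let X⁺ be an m×n matrix satisfying the Penrose conditions for X. Then for every n×n complex matrix A with A X = Y, one has ‖Y X⁺‖_F ≤ ‖A‖_F; that is, among all exact solutions A of A X = Y, the matrix Y X⁺ has minimal Frobenius norm. -/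
open Matrix

lemma trace_mul_conjTranspose_re_nonneg {n m : ℕ} (M : Matrix (Fin n) (Fin m) ℂ) :
    0 ≤ (M * Mᴴ).trace.re := by
  have h : (M * Mᴴ).trace = ∑ i, ∑ j, (Complex.normSq (M i j) : ℂ) := by
    unfold Matrix.trace
    congr 1
    funext i
    simp [Matrix.mul_apply, Matrix.conjTranspose_apply, Complex.mul_conj]
  rw [h, Complex.re_sum]
  refine Finset.sum_nonneg fun i _ => ?_
  rw [Complex.re_sum]
  refine Finset.sum_nonneg fun j _ => ?_
  simp [Complex.normSq_nonneg]

/-- Among all exact solutions `A` of `A X = Y`, the matrix `Y X⁺` has minimal Frobenius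
norm. -/
theorem pseudoinverse_solution_has_minimal_norm
    {n m : ℕ} (X Y : Matrix (Fin n) (Fin m) ℂ)
    (Xplus : Matrix (Fin m) (Fin n) ℂ)
    (h1 : X * Xplus * X = X)
    (h2 : Xplus * X * Xplus = Xplus)
    (h3 : (X * Xplus)ᴴ = X * Xplus)
    (h4 : (Xplus * X)ᴴ = Xplus * X) :
    ∀ A : Matrix (Fin n) (Fin n) ℂ, A * X = Y →
      frobNorm (Y * Xplus) ≤ frobNorm A := by
  intro A hA
  set P : Matrix (Fin n) (Fin n) ℂ := X * Xplus with hP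
  have hPP : P * P = P := by
    rw [hP]
    rw [Matrix.mul_assoc, ← Matrix.mul_assoc Xplus X Xplus, h2]
  set B : Matrix (Fin n) (Fin n) ℂ := A * P with hB
  set C : Matrix (Fin n) (Fin n) ℂ := A - B with hC
  have hYX : Y * Xplus = B := by
    rw [hB, hP, ← hA, Matrix.mul_assoc]
  have hdecomp : A * Aᴴ = B * Bᴴ + C * Cᴴ := by
    have hCH : Cᴴ = Aᴴ - P * Aᴴ := by
      rw [hC, hB, Matrix.conjTranspose_sub, Matrix.conjTranspose_mul, h3]
    have hBC : B * Cᴴ = 0 := by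
      rw [hB, hCH, Matrix.mul_sub]
      have : A * P * (P * Aᴴ) = A * P * Aᴴ := by
        rw [show A * P * (P * Aᴴ) = A * (P * P) * Aᴴ by noncomm_ring, hPP]
      rw [Matrix.mul_assoc A P Aᴴ] at this ⊢
      rw [this, sub_self]
    have hCB : C * Bᴴ = 0 := by
      have := congrArg Matrix.conjTranspose hBC
      rwa [Matrix.conjTranspose_mul, Matrix.conjTranspose_conjTranspose,
        Matrix.conjTranspose_zero] at this
    have : A = B + C := by rw [hC]; abel
    rw [this, Matrix.conjTranspose_add, Matrix.add_mul, Matrix.mul_add, Matrix.mul_add,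
      hBC, hCB]
    simp
  have htr : (A * Aᴴ).trace.re = (B * Bᴴ).trace.re + (C * Cᴴ).trace.re := by
    rw [hdecomp, Matrix.trace_add, Complex.add_re]
  have hle : (B * Bᴴ).trace.re ≤ (A * Aᴴ).trace.re := by
    rw [htr]
    linarith [trace_mul_conjTranspose_re_nonneg C]
  rw [frobNorm, frobNorm, hYX]
  exact Real.sqrt_le_sqrt hle
end

section
/- In the setting below, suppose Ã w = λ w and zᴴ Ã = λ zᴴ for some λ ∈ ℂ with λ ≠ 0, and suppose the scaling zᴴ w = 1 holds. Define the exact DMD mode φ := λ⁻¹ • (Y V Σ⁻¹) w and the adjoint DMD mode ψ := U z. Then ψᴴ φ = 1; that is, with this scaling the exact DMD modes and the adjoint DMD modes form a biorthogonal set with normalized pairing. -/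
open Matrix

theorem star_mulVec_dotProduct_mulVec {α k n r : Type*} [Fintype k] [Fintype n] [Fintype r]
    [CommRing α] [StarRing α] (U : Matrix n r α) (B : Matrix n k α) (z : r → α)
    (w : k → α) :
    star (U *ᵥ z) ⬝ᵥ (B *ᵥ w) = star z ⬝ᵥ ((Uᴴ * B) *ᵥ w) := by
  rw [star_mulVec, dotProduct_mulVec, vecMul_vecMul, ← dotProduct_mulVec]

theorem dotProduct_mulVec_of_vecMul_eq_smul {α n : Type*} [Fintype n] [CommSemiring α]
    {M : Matrix n n α} {x : n → α} {l : α} (hx : x ᵥ* M = l • x) (w : n → α) :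
    x ⬝ᵥ (M *ᵥ w) = l * (x ⬝ᵥ w) := by
  rw [dotProduct_mulVec, hx, smul_dotProduct, smul_eq_mul]

theorem exact_and_adjoint_modes_biorthogonal_general
    {n m r : ℕ}
    (Y : Matrix (Fin n) (Fin m) ℂ)
    (U : Matrix (Fin n) (Fin r) ℂ) (S : Matrix (Fin r) (Fin r) ℂ)
    (V : Matrix (Fin m) (Fin r) ℂ)
    (l : ℂ) (hl : l ≠ 0) (w z : Fin r → ℂ)
    (hz : Matrix.vecMul (star z) (Uᴴ * Y * V * S⁻¹) = l • star z)
    (hzw : star z ⬝ᵥ w = 1) :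
    star (U.mulVec z) ⬝ᵥ (l⁻¹ • (Y * V * S⁻¹).mulVec w) = 1 := by
  have hA : Uᴴ * (Y * V * S⁻¹) = Uᴴ * Y * V * S⁻¹ := by simp only [Matrix.mul_assoc]
  rw [dotProduct_smul, star_mulVec_dotProduct_mulVec, hA,
    dotProduct_mulVec_of_vecMul_eq_smul hz, hzw, mul_one, smul_eq_mul, inv_mul_cancel₀ hl]

/-- With the scaling `zᴴ w = 1`, the exact DMD mode `φ = λ⁻¹ Y V Σ⁻¹ w` and the adjoint
DMD mode `ψ = U z` satisfy `ψᴴ φ = 1` (biorthogonal normalization). -/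
theorem exact_and_adjoint_modes_biorthogonal
    {n m r : ℕ} (hn : 0 < n) (hm : 0 < m) (hr : 0 < r)
    (X Y : Matrix (Fin n) (Fin m) ℂ)
    (U : Matrix (Fin n) (Fin r) ℂ) (S : Matrix (Fin r) (Fin r) ℂ)
    (V : Matrix (Fin m) (Fin r) ℂ)
    (hX : X = U * S * Vᴴ)
    (hU : Uᴴ * U = 1) (hV : Vᴴ * V = 1)
    (hSdiag : S.IsDiag) (hSpos : ∀ i, ∃ σ : ℝ, 0 < σ ∧ S i i = (σ : ℂ))
    [Invertible S]
    (l : ℂ) (hl : l ≠ 0) (w z : Fin r → ℂ)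
    (hw : (Uᴴ * Y * V * S⁻¹).mulVec w = l • w)
    (hz : Matrix.vecMul (star z) (Uᴴ * Y * V * S⁻¹) = l • star z)
    (hzw : star z ⬝ᵥ w = 1) :
    star (U.mulVec z) ⬝ᵥ (l⁻¹ • (Y * V * S⁻¹).mulVec w) = 1 :=
  exact_and_adjoint_modes_biorthogonal_general Y U S V l hl w z hz hzw
end

section
/- In the setting below, define the matrices of EOF coefficients X̂ := Uᴴ X and Ŷ := Uᴴ Y. Then X̂ X̂ᴴ = Σ² is invertible, and the linear-inverse-modeling propagator G := (Ŷ X̂ᴴ) (X̂ X̂ᴴ)⁻¹ satisfies G = Uᴴ Y V Σ⁻¹ = Ã; that is, the LIM operator computed in EOF coordinates coincides with the low-order DMD matrix Ã. -/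
open Matrix

/-- With EOF coefficients `X̂ = Uᴴ X` and `Ŷ = Uᴴ Y`, one has `X̂ X̂ᴴ = Σ²` (which is
invertible), and the LIM propagator `G = (Ŷ X̂ᴴ)(X̂ X̂ᴴ)⁻¹` coincides with the low-order
DMD matrix `Ã = Uᴴ Y V Σ⁻¹`. -/
theorem lim_equals_dmd
    {n m r : ℕ} (hn : 0 < n) (hm : 0 < m) (hr : 0 < r)
    (X Y : Matrix (Fin n) (Fin m) ℂ)
    (U : Matrix (Fin n) (Fin r) ℂ) (S : Matrix (Fin r) (Fin r) ℂ)
    (V : Matrix (Fin m) (Fin r) ℂ)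
    (hX : X = U * S * Vᴴ)
    (hU : Uᴴ * U = 1) (hV : Vᴴ * V = 1)
    (hSdiag : S.IsDiag) (hSpos : ∀ i, ∃ σ : ℝ, 0 < σ ∧ S i i = (σ : ℂ))
    [Invertible S] :
    (Uᴴ * X) * (Uᴴ * X)ᴴ = S * S
      ∧ IsUnit ((Uᴴ * X) * (Uᴴ * X)ᴴ)
      ∧ ((Uᴴ * Y) * (Uᴴ * X)ᴴ) * ((Uᴴ * X) * (Uᴴ * X)ᴴ)⁻¹
          = Uᴴ * Y * V * S⁻¹ := by
  have hS : Sᴴ = S := by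
    ext i j
    by_cases h : i = j
    · subst h
      obtain ⟨σ, hσ, hs⟩ := hSpos i
      simp [Matrix.conjTranspose_apply, hs]
    · simp [Matrix.conjTranspose_apply, hSdiag h, hSdiag (Ne.symm h)]
  have h1 : Uᴴ * X = S * Vᴴ := by
    rw [hX, ← Matrix.mul_assoc, ← Matrix.mul_assoc, hU, Matrix.one_mul]
  have h2 : (Uᴴ * X) * (Uᴴ * X)ᴴ = S * S := by
    rw [h1, Matrix.conjTranspose_mul, Matrix.conjTranspose_conjTranspose, hS,
      Matrix.mul_assoc, ← Matrix.mul_assoc Vᴴ, hV, Matrix.one_mul]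
  refine ⟨h2, ?_, ?_⟩
  · rw [h2]
    exact (isUnit_of_invertible S).mul (isUnit_of_invertible S)
  · rw [h2, h1, Matrix.conjTranspose_mul, Matrix.conjTranspose_conjTranspose, hS,
      Matrix.mul_inv_rev, ← Matrix.mul_assoc, ← Matrix.mul_assoc (Uᴴ * Y) V S,
      Matrix.mul_assoc _ S S⁻¹, Matrix.mul_inv_of_invertible, Matrix.mul_one]
end

section
/- Let θ ∈ ℝ, let n ≥ 1 and m ≥ 2, and let q ∈ ℝⁿ. Define n×m real matrices X and Y whose k-th columns (k = 0, …, m−1) are X_k = cos(kθ) • q and Y_k = cos((k+1)θ) • q, respectively (standing-wave data). Let a ∈ ℝᵐ be the vector with a₀ = −cos θ, a₁ = 1, and a_k = 0 for k ≥ 2. Then X a = 0 while Y a = −(sin θ)² • q. Consequently, if sin θ ≠ 0 and q ≠ 0, then X and Y are not linearly consistent, and hence there exists no n×n matrix A with A X = Y. -/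
open Matrix

/-- Standing-wave data `X_k = cos(kθ) q`, `Y_k = cos((k+1)θ) q` are not linearly
consistent (unless `sin θ = 0` or `q = 0`): the vector `a = (−cos θ, 1, 0, …, 0)`
satisfies `X a = 0` but `Y a = −(sin θ)² q`, so no matrix `A` satisfies `A X = Y`. -/
theorem standing_wave_not_linearly_consistent
    {n m : ℕ} (hn : 1 ≤ n) (hm : 2 ≤ m) (θ : ℝ) (q : Fin n → ℝ)
    (X Y : Matrix (Fin n) (Fin m) ℝ)
    (hX : ∀ (i : Fin n) (k : Fin m), X i k = Real.cos ((k : ℕ) * θ) * q i)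
    (hY : ∀ (i : Fin n) (k : Fin m), Y i k = Real.cos (((k : ℕ) + 1) * θ) * q i)
    (a : Fin m → ℝ)
    (ha : ∀ k : Fin m, a k = if (k : ℕ) = 0 then -Real.cos θ
      else if (k : ℕ) = 1 then 1 else 0) :
    X.mulVec a = 0
      ∧ Y.mulVec a = (-(Real.sin θ) ^ 2) • q
      ∧ (Real.sin θ ≠ 0 → q ≠ 0 →
          (¬ ∀ c : Fin m → ℝ, X.mulVec c = 0 → Y.mulVec c = 0)
            ∧ ¬ ∃ A : Matrix (Fin n) (Fin n) ℝ, A * X = Y) := by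
  have h0 : (0 : ℕ) < m := by omega
  have h1 : (1 : ℕ) < m := by omega
  set k0 : Fin m := ⟨0, h0⟩
  set k1 : Fin m := ⟨1, h1⟩
  have key : ∀ (g : Fin m → ℝ), ∑ k, g k * a k = g k0 * (-Real.cos θ) + g k1 := by
    intro g
    have hsub : ({k0, k1} : Finset (Fin m)) ⊆ Finset.univ := Finset.subset_univ _
    rw [← Finset.sum_subset hsub]
    · rw [Finset.sum_pair (by simp [k0, k1, Fin.ext_iff])]
      simp [ha, k0, k1]
    · intro x _ hx
      have hx0 : (x : ℕ) ≠ 0 := by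
        intro h; apply hx; simp [k0, k1, Fin.ext_iff, h]
      have hx1 : (x : ℕ) ≠ 1 := by
        intro h; apply hx; simp [k0, k1, Fin.ext_iff, h]
      simp [ha, hx0, hx1]
  have hXa : X.mulVec a = 0 := by
    funext i
    simp only [mulVec, dotProduct, Pi.zero_apply]
    rw [key (fun k => X i k)]
    simp [hX, k0, k1]
    ring
  have hYa : Y.mulVec a = (-(Real.sin θ) ^ 2) • q := by
    funext i
    simp only [mulVec, dotProduct, Pi.smul_apply, smul_eq_mul]
    rw [key (fun k => Y i k)]
    simp only [hY, k0, k1]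
    push_cast
    rw [show ((0:ℝ) + 1) * θ = θ by ring, show ((1:ℝ) + 1) * θ = 2 * θ by ring,
      Real.cos_two_mul]
    linear_combination q i * Real.sin_sq_add_cos_sq θ
  refine ⟨hXa, hYa, fun hs hq => ?_⟩
  have hne : Y.mulVec a ≠ 0 := by
    rw [hYa]
    intro h
    apply hq
    funext i
    have := congrFun h i
    simp only [Pi.smul_apply, smul_eq_mul, Pi.zero_apply] at this
    have hs2 : (-(Real.sin θ) ^ 2) ≠ 0 := by
      simp [pow_eq_zero_iff, hs]
    exact (mul_eq_zero.mp this).resolve_left hs2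
  constructor
  · intro h; exact hne (h a hXa)
  · rintro ⟨A, hA⟩
    apply hne
    rw [← hA, ← mulVec_mulVec, hXa, mulVec_zero]
end
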